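/- In a locally compact group G with closed subgroup H commensurated by a compact subgroup K, for each n ≥ 1 the set Ω_n = {u ∈ K : |H : H ∩ uHu⁻¹| ≤ n and |H : H ∩ u⁻¹Hu| ≤ n} is closed in K. -/

import Mathlib

def conjS {G : Type*} [Group G] (g : G) (H : Subgroup G) : Subgroup G :=
  H.map (MulAut.conj g).toMonoidHom

/-!
The index of `H ∩ uHu⁻¹` in `H` is finite and at most `n` iff among any `n + 1` elements
`h₀, …, hₙ` of `H` two, `hᵢ` and `hⱼ`, lie in the same coset, i.e. `u⁻¹ hᵢ⁻¹ hⱼ u ∈ H`. For a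
fixed family this is a finite union of closed conditions on `u` (as `H` is closed), so the set of
such `u` is closed. As `relIndex` is `0` for an infinite index, `≤ n` alone is not this
condition; it is on `K`, where all the indices in question are finite.
-/

theorem Finite.and_card_le_iff_forall_not_injective {α : Type*} (n : ℕ) :
    Finite α ∧ Nat.card α ≤ n ↔ ∀ f : Fin (n + 1) → α, ¬ Function.Injective f := by
  constructor
  · rintro ⟨_, hle⟩ f hf
    have := Nat.card_le_card_of_injective f hf
    simp only [Nat.card_eq_fintype_card, Fintype.card_fin] at this
    omega
  · intro h
    by_contra hcon
    rcases finite_or_infinite α with hα | hα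
    · have : Fintype α := Fintype.ofFinite α
      have hlt : Fintype.card (Fin (n + 1)) ≤ Fintype.card α := by
        rw [Fintype.card_fin, ← Nat.card_eq_fintype_card]
        exact Nat.lt_of_not_le fun hle => hcon ⟨hα, hle⟩
      obtain ⟨e⟩ := Function.Embedding.nonempty_of_card_le hlt
      exact h e e.injective
    · exact h _ ((Infinite.natEmbedding α).injective.comp Fin.val_injective)

theorem Subgroup.index_ne_zero_and_le_iff {Γ : Type*} [Group Γ] (S : Subgroup Γ) (n : ℕ) :
    S.index ≠ 0 ∧ S.index ≤ n ↔
      ∀ f : Fin (n + 1) → Γ, ∃ i j, i ≠ j ∧ (f i)⁻¹ * f j ∈ S := by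
  rw [← finiteIndex_iff, finiteIndex_iff_finite_quotient, index,
    Finite.and_card_le_iff_forall_not_injective]
  refine ⟨fun h f => ?_, fun h q hq => ?_⟩
  · obtain ⟨i, j, hij, hne⟩ := Function.not_injective_iff.mp (h ((↑) ∘ f))
    exact ⟨i, j, hne, QuotientGroup.eq.mp hij⟩
  · obtain ⟨i, j, hne, hij⟩ := h (Quotient.out ∘ q)
    refine hne (hq ?_)
    simpa using QuotientGroup.eq.mpr hij

section

variable {G : Type*} [Group G]

lemma mem_conjS {u g : G} {H : Subgroup G} : g ∈ conjS u H ↔ u⁻¹ * g * u ∈ H := by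
  rw [conjS, Subgroup.mem_map_equiv]
  simp [mul_assoc]

lemma relIndex_inf_conjS_ne_zero_and_le_iff (H : Subgroup G) (u : G) (n : ℕ) :
    (H ⊓ conjS u H).relIndex H ≠ 0 ∧ (H ⊓ conjS u H).relIndex H ≤ n ↔
      ∀ f : Fin (n + 1) → H, ∃ i j, i ≠ j ∧ u⁻¹ * ↑((f i)⁻¹ * f j) * u ∈ H := by
  simp only [Subgroup.relIndex, Subgroup.index_ne_zero_and_le_iff, Subgroup.mem_subgroupOf,
    Subgroup.mem_inf, mem_conjS, SetLike.coe_mem, true_and]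

variable [TopologicalSpace G] [IsTopologicalGroup G]

theorem isClosed_setOf_relIndex_inf_conjS_le {H : Subgroup G} (hH : IsClosed (H : Set G))
    (n : ℕ) :
    IsClosed {u : G | (H ⊓ conjS u H).relIndex H ≠ 0 ∧ (H ⊓ conjS u H).relIndex H ≤ n} := by
  simp only [relIndex_inf_conjS_ne_zero_and_le_iff, Set.ofPred_forall, Set.ofPred_exists]
  refine isClosed_iInter fun f => isClosed_iUnion_of_finite fun i =>
    isClosed_iUnion_of_finite fun j => ?_
  exact isClosed_const.inter (hH.preimage (by fun_prop))

end

theorem stmt_6_general {G : Type*} [Group G] [TopologicalSpace G] [IsTopologicalGroup G]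
    [T2Space G]
    (H K : Subgroup G) (hH : IsClosed (H : Set G)) (hK : IsCompact (K : Set G))
    (hcomm : ∀ u ∈ K, (H ⊓ conjS u H).relIndex H ≠ 0 ∧
      (H ⊓ conjS u⁻¹ H).relIndex H ≠ 0)
    (n : ℕ) :
    IsClosed {u : G | u ∈ K ∧ (H ⊓ conjS u H).relIndex H ≤ n ∧
      (H ⊓ conjS u⁻¹ H).relIndex H ≤ n} := by
  have hΩ := isClosed_setOf_relIndex_inf_conjS_le hH n
  convert hK.isClosed.inter (hΩ.inter (hΩ.preimage continuous_inv)) using 1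
  ext u
  simp only [Set.mem_ofPred_eq, Set.mem_inter_iff, Set.mem_preimage, SetLike.mem_coe]
  constructor
  · rintro ⟨huK, h, h'⟩
    exact ⟨huK, ⟨(hcomm u huK).1, h⟩, ⟨(hcomm u huK).2, h'⟩⟩
  · rintro ⟨huK, ⟨-, h⟩, ⟨-, h'⟩⟩
    exact ⟨huK, h, h'⟩

theorem stmt_6 {G : Type*} [Group G] [TopologicalSpace G] [IsTopologicalGroup G]
    [LocallyCompactSpace G] [T2Space G]
    (H K : Subgroup G) (hH : IsClosed (H : Set G)) (hK : IsCompact (K : Set G))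
    (hcomm : ∀ u ∈ K, (H ⊓ conjS u H).relIndex H ≠ 0 ∧
      (H ⊓ conjS u⁻¹ H).relIndex H ≠ 0)
    (n : ℕ) (hn : 1 ≤ n) :
    IsClosed {u : G | u ∈ K ∧ (H ⊓ conjS u H).relIndex H ≤ n ∧
      (H ⊓ conjS u⁻¹ H).relIndex H ≤ n} :=
  stmt_6_general H K hH hK hcomm n
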